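/- arXiv:0708.4346 — 4 statements merged into one kernel-verified Lean document; each statement's English description precedes it below -/
import Mathlib

section
/- Let H, H₀ : [r₀, ∞) → ℝ be C¹ functions with the same limit behavior, satisfying the ODEs ∂_r H = |𝕀|² - n and ∂_r H₀ = |𝕀₀|² - n, where |𝕀|², |𝕀₀|² : [r₀,∞) → ℝ are functions satisfying | |𝕀|² - |𝕀₀|² | ≤ C₀ (a + b) pointwise for nonnegative functions a, b. Assume H - H₀ and its derivative decay faster than every exponential. Then for every λ > 2, ∫_{r₀}^{∞} (a + b)² e^{2λ r} dr ≥ C₀^{-2} λ² ∫_{r₀}^{∞} |H - H₀|² e^{2λ r} dr. -/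
open MeasureTheory Set Filter Real Asymptotics

/-- Abstract form of estimate (9) of the paper: if `∂_r H = |𝕀|² - n`, `∂_r H₀ = |𝕀₀|² - n`
with `||𝕀|² - |𝕀₀|²| ≤ C₀ (a + b)` pointwise, and `H - H₀` decays (with its derivative)
faster than every exponential, then for every `λ > 2`,
`∫ (a+b)² e^{2λr} ≥ C₀⁻² λ² ∫ |H - H₀|² e^{2λr}`. -/
theorem stmt6 (r₀ C₀ n : ℝ) (hC₀ : 0 < C₀) (H H₀ I2 I02 a b : ℝ → ℝ)
    (hH : ∀ r ∈ Ici r₀, HasDerivAt H (I2 r - n) r)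
    (hH₀ : ∀ r ∈ Ici r₀, HasDerivAt H₀ (I02 r - n) r)
    (hI2cont : ContinuousOn I2 (Ici r₀)) (hI02cont : ContinuousOn I02 (Ici r₀))
    (ha : ∀ r ∈ Ici r₀, 0 ≤ a r) (hb : ∀ r ∈ Ici r₀, 0 ≤ b r)
    (hptw : ∀ r ∈ Ici r₀, |I2 r - I02 r| ≤ C₀ * (a r + b r))
    (hdecay : ∀ l : ℝ, 0 < l → (fun r => H r - H₀ r) =O[atTop] fun r => exp (-l * r))
    (hdecay' : ∀ l : ℝ, 0 < l → (fun r => I2 r - I02 r) =O[atTop] fun r => exp (-l * r))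
    (hint : ∀ l : ℝ, 2 < l →
      IntegrableOn (fun r => (a r + b r) ^ 2 * exp (2 * l * r)) (Ici r₀) ∧
      IntegrableOn (fun r => (H r - H₀ r) ^ 2 * exp (2 * l * r)) (Ici r₀) ∧
      IntegrableOn (fun r => (I2 r - I02 r) ^ 2 * exp (2 * l * r)) (Ici r₀)) :
    ∀ l : ℝ, 2 < l →
      (∫ r in Ici r₀, (a r + b r) ^ 2 * exp (2 * l * r)) ≥
        (C₀ ^ 2)⁻¹ * l ^ 2 * ∫ r in Ici r₀, (H r - H₀ r) ^ 2 * exp (2 * l * r) := by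
  intro l hl
  have hl0 : (0:ℝ) < l := by linarith
  obtain ⟨hab_int, hf_int, hf'_int⟩ := hint l hl
  set f : ℝ → ℝ := fun r => H r - H₀ r with hf_def
  set df : ℝ → ℝ := fun r => I2 r - I02 r with hdf_def
  set φ : ℝ → ℝ := fun r => exp (2 * l * r) with hφ_def
  have hφpos : ∀ r, 0 < φ r := fun r => exp_pos _
  -- derivative of f
  have hf : ∀ r ∈ Ici r₀, HasDerivAt f (df r) r := by
    intro r hr
    have := (hH r hr).sub (hH₀ r hr)
    exact this.congr_deriv (by simp only [hdf_def]; ring)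
  -- derivative of φ
  have hφ : ∀ r : ℝ, HasDerivAt φ (2 * l * φ r) r := by
    intro r
    have : HasDerivAt (fun r : ℝ => 2 * l * r) (2 * l) r := by
      simpa using (hasDerivAt_id r).const_mul (2 * l)
    simpa [hφ_def, mul_comm] using this.exp
  -- measurability helpers
  have hfm : AEStronglyMeasurable f (volume.restrict (Ioi r₀)) := by
    have : ContinuousOn f (Ici r₀) := fun r hr =>
      (hf r hr).continuousAt.continuousWithinAt
    exact ((this.mono Ioi_subset_Ici_self).aestronglyMeasurable measurableSet_Ioi)
  have hdfm : AEStronglyMeasurable df (volume.restrict (Ioi r₀)) := by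
    have : ContinuousOn df (Ici r₀) := hI2cont.sub hI02cont
    exact ((this.mono Ioi_subset_Ici_self).aestronglyMeasurable measurableSet_Ioi)
  have hφm : AEStronglyMeasurable φ (volume.restrict (Ioi r₀)) :=
    (continuous_exp.comp (continuous_const.mul continuous_id)).aestronglyMeasurable
  -- integrability of the key functions on Ioi
  have hf2 : IntegrableOn (fun r => f r ^ 2 * φ r) (Ioi r₀) :=
    hf_int.mono_set Ioi_subset_Ici_self
  have hdf2 : IntegrableOn (fun r => df r ^ 2 * φ r) (Ioi r₀) :=
    hf'_int.mono_set Ioi_subset_Ici_self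
  have hffdm : AEStronglyMeasurable (fun r => f r * df r * φ r)
      (volume.restrict (Ioi r₀)) := (hfm.mul hdfm).mul hφm
  have hffd : IntegrableOn (fun r => f r * df r * φ r) (Ioi r₀) := by
    refine Integrable.mono' ((hf2.add hdf2).const_mul (1/2 : ℝ)) hffdm ?_
    refine Filter.Eventually.of_forall fun r => ?_
    have h1 : |f r * df r| ≤ (1/2) * (f r ^ 2 + df r ^ 2) := by
      rw [abs_mul]
      have h2 := two_mul_le_add_sq (|f r|) (|df r|)
      rw [sq_abs, sq_abs, mul_assoc] at h2
      set u := |f r| * |df r| with hu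
      set v := f r ^ 2 + df r ^ 2 with hv
      clear_value u v
      linarith
    have := mul_le_mul_of_nonneg_right h1 (hφpos r).le
    calc ‖f r * df r * φ r‖ = |f r * df r| * φ r := by
          rw [Real.norm_eq_abs, abs_mul, abs_of_pos (hφpos r)]
      _ ≤ (1/2) * (f r ^ 2 + df r ^ 2) * φ r := this
      _ = (1/2) * (f r ^ 2 * φ r + df r ^ 2 * φ r) := by ring
  -- integration by parts: F r = f r ^ 2 * φ r
  set F : ℝ → ℝ := fun r => f r ^ 2 * φ r with hF_def
  have hFderiv : ∀ r ∈ Ici r₀, HasDerivAt F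
      (2 * (f r * df r * φ r) + 2 * l * (f r ^ 2 * φ r)) r := by
    intro r hr
    have h1 : HasDerivAt (fun r => f r ^ 2) (2 * f r * df r) r := by
      exact ((hf r hr).pow 2).congr_deriv (by norm_num)
    have := h1.mul (hφ r)
    exact this.congr_deriv (by ring)
  have hF'int : IntegrableOn
      (fun r => 2 * (f r * df r * φ r) + 2 * l * (f r ^ 2 * φ r)) (Ioi r₀) :=
    (hffd.const_mul 2).add (hf2.const_mul (2 * l))
  -- F tends to 0 at infinity
  have hFto : Tendsto F atTop (nhds 0) := by
    have h1 : f =O[atTop] fun r => exp (-(l + 1) * r) := hdecay (l + 1) (by linarith)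
    have h2 : (fun r => f r * exp (l * r)) =O[atTop] fun r => exp (-r) := by
      have := h1.mul (isBigO_refl (fun r : ℝ => exp (l * r)) atTop)
      refine this.trans (Asymptotics.isBigO_of_le _ fun r => ?_)
      rw [← Real.exp_add]
      simp only [Real.norm_eq_abs, abs_exp]
      exact le_of_eq (by ring_nf)
    have h3 : F =O[atTop] fun r => exp (-r) * exp (-r) := by
      have := h2.mul h2
      refine (Asymptotics.isBigO_of_le _ fun r => ?_).trans this
      have he : exp (l * r) * exp (l * r) = exp (2 * l * r) := by
        rw [← Real.exp_add]; ring_nf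
      have : F r = (f r * exp (l * r)) * (f r * exp (l * r)) := by
        show f r ^ 2 * exp (2 * l * r) = _
        rw [← he]; ring
      rw [this]
    have h4 : Tendsto (fun r : ℝ => exp (-r) * exp (-r)) atTop (nhds 0) := by
      have : Tendsto (fun r : ℝ => exp (-r)) atTop (nhds 0) :=
        Real.tendsto_exp_neg_atTop_nhds_zero
      simpa using this.mul this
    exact h3.trans_tendsto h4
  have hFcont : ContinuousWithinAt F (Ici r₀) r₀ :=
    (hFderiv r₀ self_mem_Ici).continuousAt.continuousWithinAt
  have hIBP : ∫ r in Ioi r₀, (2 * (f r * df r * φ r) + 2 * l * (f r ^ 2 * φ r))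
      = 0 - F r₀ :=
    integral_Ioi_of_hasDerivAt_of_tendsto hFcont
      (fun x hx => hFderiv x (mem_Ici.mpr (le_of_lt hx))) hF'int hFto
  -- name the integrals
  set I1 : ℝ := ∫ r in Ioi r₀, df r ^ 2 * φ r with hI1
  set Ii : ℝ := ∫ r in Ioi r₀, f r ^ 2 * φ r with hIi
  set Im : ℝ := ∫ r in Ioi r₀, f r * df r * φ r with hIm
  have hsplit : 2 * Im + 2 * l * Ii = 0 - F r₀ := by
    rw [hIm, hIi, ← integral_const_mul, ← integral_const_mul,
      ← integral_add (hffd.const_mul 2) (hf2.const_mul (2 * l))]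
    exact hIBP
  -- nonnegativity of the square
  have hsq_int : IntegrableOn (fun r => (df r + l * f r) ^ 2 * φ r) (Ioi r₀) := by
    have heq : (fun r => (df r + l * f r) ^ 2 * φ r) =
        fun r => df r ^ 2 * φ r + 2 * l * (f r * df r * φ r) + l ^ 2 * (f r ^ 2 * φ r) := by
      funext r; ring
    rw [heq]
    exact (hdf2.add (hffd.const_mul (2 * l))).add (hf2.const_mul (l ^ 2))
  have hsq : 0 ≤ I1 + 2 * l * Im + l ^ 2 * Ii := by
    have h0 : 0 ≤ ∫ r in Ioi r₀, (df r + l * f r) ^ 2 * φ r :=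
      integral_nonneg fun r => mul_nonneg (sq_nonneg _) (hφpos r).le
    have heq : (∫ r in Ioi r₀, (df r + l * f r) ^ 2 * φ r)
        = I1 + 2 * l * Im + l ^ 2 * Ii := by
      have hsum : IntegrableOn
          (fun r => df r ^ 2 * φ r + 2 * l * (f r * df r * φ r)) (Ioi r₀) :=
        hdf2.add (hffd.const_mul (2 * l))
      rw [hI1, hIm, hIi, ← integral_const_mul, ← integral_const_mul,
        ← integral_add hdf2 (hffd.const_mul (2 * l)),
        ← integral_add hsum (hf2.const_mul (l ^ 2))]
      congr 1
      funext r; ring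
    linarith
  have hFr₀ : 0 ≤ F r₀ := mul_nonneg (sq_nonneg _) (hφpos r₀).le
  -- Step B: I1 ≥ l² Ii
  have hB : l ^ 2 * Ii ≤ I1 := by nlinarith
  -- Step A: ∫ (a+b)² φ ≥ C₀⁻² I1
  have hA : (C₀ ^ 2)⁻¹ * I1 ≤ ∫ r in Ioi r₀, (a r + b r) ^ 2 * φ r := by
    have hpt : ∀ r ∈ Ioi r₀, df r ^ 2 * φ r ≤ C₀ ^ 2 * ((a r + b r) ^ 2 * φ r) := by
      intro r hr
      have hr' : r ∈ Ici r₀ := mem_Ici.mpr (le_of_lt hr)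
      have h1 := hptw r hr'
      have h2 : df r ^ 2 ≤ (C₀ * (a r + b r)) ^ 2 := by
        rw [← sq_abs (df r)]
        exact pow_le_pow_left₀ (abs_nonneg _) h1 2
      nlinarith [hφpos r, (hφpos r).le]
    have := setIntegral_mono_on hdf2
      ((hab_int.mono_set Ioi_subset_Ici_self).const_mul (C₀ ^ 2))
      measurableSet_Ioi hpt
    rw [integral_const_mul] at this
    rw [inv_mul_le_iff₀ (by positivity : (0:ℝ) < C₀ ^ 2)]
    exact this
  -- combine
  have hICi1 : (∫ r in Ici r₀, (a r + b r) ^ 2 * exp (2 * l * r))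
      = ∫ r in Ioi r₀, (a r + b r) ^ 2 * φ r := integral_Ici_eq_integral_Ioi
  have hICi2 : (∫ r in Ici r₀, (H r - H₀ r) ^ 2 * exp (2 * l * r)) = Ii :=
    integral_Ici_eq_integral_Ioi
  rw [ge_iff_le, hICi1, hICi2]
  calc (C₀ ^ 2)⁻¹ * l ^ 2 * Ii = (C₀ ^ 2)⁻¹ * (l ^ 2 * Ii) := by ring
    _ ≤ (C₀ ^ 2)⁻¹ * I1 := by
        exact mul_le_mul_of_nonneg_left hB (by positivity)
    _ ≤ _ := hA
end

section
/- Let f : (0, x₀] → ℝ be C¹, vanishing to infinite order at 0 together with f', with f(x₀) = 0, and let λ > 0. Then ∫_0^{x₀} 2λ x^{-2λ-1} f f' dx = λ(2λ+1) ∫_0^{x₀} f² x^{-2λ-2} dx, and consequently ∫_0^{x₀} f'² x^{-2λ} dx ≥ λ² ∫_0^{x₀} f² x^{-2λ-2} dx. -/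
open MeasureTheory Set Filter Real Asymptotics

private lemma tendsto_setIntegral_Ioc_aux (x₀ : ℝ) (hx₀ : 0 < x₀) (g : ℝ → ℝ)
    (hg : IntegrableOn g (Ioc 0 x₀)) :
    Tendsto (fun ε => ∫ x in Ioc ε x₀, g x) (nhdsWithin 0 (Ioi 0))
      (nhds (∫ x in Ioc (0:ℝ) x₀, g x)) := by
  have hcover : AECover (volume.restrict (Ioc (0:ℝ) x₀)) (nhdsWithin 0 (Ioi 0))
      (fun ε : ℝ => Ioc ε x₀) :=
    aecover_Ioc_of_Ioc (tendsto_id.mono_left nhdsWithin_le_nhds) tendsto_const_nhds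
  have h := hcover.integral_tendsto_of_countably_generated hg
  refine h.congr' ?_
  filter_upwards [self_mem_nhdsWithin] with ε (hε : ε ∈ Ioi (0:ℝ))
  rw [Measure.restrict_restrict measurableSet_Ioc, Ioc_inter_Ioc]
  congr 1
  rw [max_eq_left (le_of_lt hε), min_self]

/-- Integration by parts at a finite boundary (underlying estimate (21) of the paper):
for `f` a `C¹` function on `(0, x₀]` vanishing to infinite order at `0` together with `f'`,
and with `f x₀ = 0`, one has the identity
`∫_0^{x₀} 2λ x^{-2λ-1} f f' dx = λ(2λ+1) ∫_0^{x₀} f² x^{-2λ-2} dx`,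
and consequently `∫_0^{x₀} f'² x^{-2λ} dx ≥ λ² ∫_0^{x₀} f² x^{-2λ-2} dx`. -/
theorem stmt13 (x₀ l : ℝ) (hx₀ : 0 < x₀) (hl : 0 < l) (f f' : ℝ → ℝ)
    (hderiv : ∀ x ∈ Ioc (0:ℝ) x₀, HasDerivAt f (f' x) x)
    (hf'cont : ContinuousOn f' (Ioc 0 x₀))
    (hfvanish : ∀ N : ℕ, f =O[nhdsWithin 0 (Ioi 0)] fun x => x ^ N)
    (hf'vanish : ∀ N : ℕ, f' =O[nhdsWithin 0 (Ioi 0)] fun x => x ^ N)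
    (hfx₀ : f x₀ = 0)
    (hint1 : IntegrableOn (fun x => (f' x) ^ 2 * x ^ (-2 * l)) (Ioc 0 x₀))
    (hint2 : IntegrableOn (fun x => (f x) ^ 2 * x ^ (-2 * l - 2)) (Ioc 0 x₀))
    (hint3 : IntegrableOn (fun x => f x * f' x * x ^ (-2 * l - 1)) (Ioc 0 x₀)) :
    (∫ x in Ioc (0:ℝ) x₀, 2 * l * x ^ (-2 * l - 1) * (f x * f' x)) =
      l * (2 * l + 1) * (∫ x in Ioc (0:ℝ) x₀, (f x) ^ 2 * x ^ (-2 * l - 2)) ∧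
    (∫ x in Ioc (0:ℝ) x₀, (f' x) ^ 2 * x ^ (-2 * l)) ≥
      l ^ 2 * ∫ x in Ioc (0:ℝ) x₀, (f x) ^ 2 * x ^ (-2 * l - 2) := by
  set p : ℝ := -2 * l - 1 with hp
  -- A : integrand of the first statement
  set A : ℝ → ℝ := fun x => 2 * l * x ^ p * (f x * f' x) with hA
  set B : ℝ → ℝ := fun x => (f x) ^ 2 * x ^ (-2 * l - 2) with hB
  set G : ℝ → ℝ := fun x => (f x) ^ 2 * x ^ p with hG
  set D : ℝ → ℝ := fun x => 2 * f x * f' x * x ^ p + (f x) ^ 2 * (p * x ^ (p - 1)) with hD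
  have hcf : ContinuousOn f (Ioc 0 x₀) := fun x hx =>
    (hderiv x hx).continuousAt.continuousWithinAt
  have hrpow : ∀ q : ℝ, ContinuousOn (fun x : ℝ => x ^ q) (Ioc 0 x₀) :=
    fun q => ContinuousOn.rpow_const continuousOn_id (fun x hx => Or.inl (ne_of_gt hx.1))
  have hcD : ContinuousOn D (Ioc 0 x₀) := by
    apply ContinuousOn.add
    · exact ((continuousOn_const.mul hcf).mul hf'cont).mul (hrpow p)
    · exact (hcf.pow 2).mul (continuousOn_const.mul (hrpow (p - 1)))
  have hcB : ContinuousOn B (Ioc 0 x₀) := (hcf.pow 2).mul (hrpow (-2 * l - 2))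
  have hGderiv : ∀ x ∈ Ioc (0:ℝ) x₀, HasDerivAt G (D x) x := by
    intro x hx
    have h1 : HasDerivAt (fun y => (f y) ^ 2) (2 * f x * f' x) x := by
      have := (hderiv x hx).pow 2
      exact this.congr_deriv (by ring)
    have h2 : HasDerivAt (fun y : ℝ => y ^ p) (p * x ^ (p - 1)) x :=
      Real.hasDerivAt_rpow_const (Or.inl (ne_of_gt hx.1))
    exact h1.mul h2
  -- key interval identity
  have key : ∀ ε ∈ Ioo (0:ℝ) x₀,
      ∫ x in Ioc ε x₀, A x = -l * G ε + l * (2 * l + 1) * ∫ x in Ioc ε x₀, B x := by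
    intro ε hε
    have hsub : Icc ε x₀ ⊆ Ioc 0 x₀ := fun y hy => ⟨lt_of_lt_of_le hε.1 hy.1, hy.2⟩
    have huIcc : uIcc ε x₀ = Icc ε x₀ := uIcc_of_le hε.2.le
    have hDint : IntervalIntegrable D volume ε x₀ :=
      (hcD.mono (huIcc ▸ hsub)).intervalIntegrable
    have hBint : IntervalIntegrable B volume ε x₀ :=
      (hcB.mono (huIcc ▸ hsub)).intervalIntegrable
    have hftc : ∫ x in ε..x₀, D x = G x₀ - G ε := by
      apply intervalIntegral.integral_eq_sub_of_hasDerivAt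
      · intro x hx
        exact hGderiv x (hsub (huIcc ▸ hx))
      · exact hDint
    have hGx₀ : G x₀ = 0 := by simp [hG, hfx₀]
    have hAeq : EqOn A (fun x => l • D x + (l * (2 * l + 1)) • B x) (uIcc ε x₀) := by
      intro x hx
      have hx1 : x ^ (p - 1) = x ^ (-2 * l - 2) := by
        rw [show p - 1 = -2 * l - 2 by rw [hp]; ring]
      simp only [hA, hD, hB, hx1, smul_eq_mul]
      ring
    have hAI : (∫ x in Ioc ε x₀, A x) = ∫ x in ε..x₀, A x :=
      (intervalIntegral.integral_of_le hε.2.le).symm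
    have hBI : (∫ x in ε..x₀, B x) = ∫ x in Ioc ε x₀, B x :=
      intervalIntegral.integral_of_le hε.2.le
    have hcong : (∫ x in ε..x₀, A x)
        = ∫ x in ε..x₀, (l • D x + (l * (2 * l + 1)) • B x) :=
      intervalIntegral.integral_congr hAeq
    have e_add : (∫ x in ε..x₀, (l • D x + (l * (2 * l + 1)) • B x))
        = (∫ x in ε..x₀, l • D x) + ∫ x in ε..x₀, (l * (2 * l + 1)) • B x := by
      exact intervalIntegral.integral_add (hDint.smul l) (hBint.smul (l * (2 * l + 1)))
    have e_s1 : (∫ x in ε..x₀, l • D x) = l • ∫ x in ε..x₀, D x := by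
      exact intervalIntegral.integral_smul l D
    have e_s2 : (∫ x in ε..x₀, (l * (2 * l + 1)) • B x)
        = (l * (2 * l + 1)) • ∫ x in ε..x₀, B x := by
      exact intervalIntegral.integral_smul (l * (2 * l + 1)) B
    rw [hAI, hcong, e_add, e_s1, e_s2, smul_eq_mul, smul_eq_mul, hftc, hGx₀, hBI]
    ring
  -- G tends to 0 at 0+
  have hGlim : Tendsto G (nhdsWithin 0 (Ioi 0)) (nhds 0) := by
    set N : ℕ := ⌈l⌉₊ + 1 with hN
    have hNl : (2 * l + 1) < 2 * (N : ℝ) := by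
      have : l ≤ (⌈l⌉₊ : ℝ) := Nat.le_ceil l
      have hNr : (N : ℝ) = (⌈l⌉₊ : ℝ) + 1 := by push_cast [hN]; ring
      nlinarith
    have hO : G =O[nhdsWithin 0 (Ioi 0)] fun x => (x ^ N * x ^ N) * x ^ p := by
      have h1 : (fun x => (f x) ^ 2) =O[nhdsWithin 0 (Ioi 0)] fun x => x ^ N * x ^ N := by
        have := (hfvanish N).mul (hfvanish N)
        simpa [sq] using this
      exact h1.mul (isBigO_refl (fun x : ℝ => x ^ p) _)
    have hq : (0:ℝ) < 2 * N + p := by simp only [hp]; linarith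
    have hlim0 : Tendsto (fun x : ℝ => (x ^ N * x ^ N) * x ^ p)
        (nhdsWithin 0 (Ioi 0)) (nhds 0) := by
      have h2 : Tendsto (fun x : ℝ => x ^ (2 * (N:ℝ) + p)) (nhdsWithin 0 (Ioi 0)) (nhds 0) := by
        have hc : ContinuousAt (fun x : ℝ => x ^ (2 * (N:ℝ) + p)) 0 :=
          Real.continuousAt_rpow_const 0 _ (Or.inr hq.le)
        have h3 : Tendsto (fun x : ℝ => x ^ (2 * (N:ℝ) + p)) (nhdsWithin 0 (Ioi 0))
            (nhds ((0:ℝ) ^ (2 * (N:ℝ) + p))) := hc.tendsto.mono_left nhdsWithin_le_nhds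
        rwa [Real.zero_rpow (ne_of_gt hq)] at h3
      refine h2.congr' ?_
      filter_upwards [self_mem_nhdsWithin] with x (hx : x ∈ Ioi (0:ℝ))
      rw [show 2 * (N:ℝ) + p = (N:ℝ) + (N:ℝ) + p by ring, Real.rpow_add hx,
        Real.rpow_add hx, Real.rpow_natCast]
    exact hO.trans_tendsto hlim0
  -- integrability of A
  have hAint : IntegrableOn A (Ioc 0 x₀) := by
    have : A = fun x => (2 * l) * (f x * f' x * x ^ (-2 * l - 1)) := by
      funext x; simp only [hA, hp]; ring
    rw [this]
    exact hint3.const_mul (2 * l)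
  -- limits
  have hlimA := tendsto_setIntegral_Ioc_aux x₀ hx₀ A hAint
  have hlimB := tendsto_setIntegral_Ioc_aux x₀ hx₀ B hint2
  have hlimRHS : Tendsto (fun ε => -l * G ε + l * (2 * l + 1) * ∫ x in Ioc ε x₀, B x)
      (nhdsWithin 0 (Ioi 0))
      (nhds (-l * 0 + l * (2 * l + 1) * ∫ x in Ioc (0:ℝ) x₀, B x)) :=
    ((tendsto_const_nhds.mul hGlim)).add (tendsto_const_nhds.mul hlimB)
  have heq : (fun ε => ∫ x in Ioc ε x₀, A x) =ᶠ[nhdsWithin 0 (Ioi 0)]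
      (fun ε => -l * G ε + l * (2 * l + 1) * ∫ x in Ioc ε x₀, B x) := by
    filter_upwards [Ioo_mem_nhdsGT_of_mem (left_mem_Ico.2 hx₀)] with ε hε
    exact key ε hε
  have part1 : (∫ x in Ioc (0:ℝ) x₀, A x) = l * (2 * l + 1) * ∫ x in Ioc (0:ℝ) x₀, B x := by
    have := tendsto_nhds_unique (hlimA.congr' heq) hlimRHS
    simpa using this
  refine ⟨part1, ?_⟩
  -- Part 2
  have hA3 : (∫ x in Ioc (0:ℝ) x₀, A x)
      = 2 * l * ∫ x in Ioc (0:ℝ) x₀, f x * f' x * x ^ (-2 * l - 1) := by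
    have hc : (∫ x in Ioc (0:ℝ) x₀, A x)
        = ∫ x in Ioc (0:ℝ) x₀, (2 * l) • (f x * f' x * x ^ (-2 * l - 1)) := by
      congr 1; funext x; simp only [hA, hp, smul_eq_mul]; ring
    have hs : (∫ x in Ioc (0:ℝ) x₀, (2 * l) • (f x * f' x * x ^ (-2 * l - 1)))
        = (2 * l) • ∫ x in Ioc (0:ℝ) x₀, f x * f' x * x ^ (-2 * l - 1) := by
      exact integral_smul (2 * l) _
    rw [hc, hs, smul_eq_mul]
  set R : ℝ → ℝ := fun x =>
    (f' x) ^ 2 * x ^ (-2 * l) - 2 * l * (f x * f' x * x ^ (-2 * l - 1))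
      + l ^ 2 * ((f x) ^ 2 * x ^ (-2 * l - 2)) with hR
  have hRnonneg : ∀ x ∈ Ioc (0:ℝ) x₀, 0 ≤ R x := by
    intro x hx
    have hx0 : (0:ℝ) < x := hx.1
    have e1 : x ^ (-2 * l - 1) = x ^ (-2 * l) * x⁻¹ := by
      rw [show -2 * l - 1 = -2 * l + (-1) by ring, Real.rpow_add hx0, Real.rpow_neg_one]
    have e2 : x ^ (-2 * l - 2) = x ^ (-2 * l) * x⁻¹ * x⁻¹ := by
      rw [show -2 * l - 2 = -2 * l + (-1) + (-1) by ring, Real.rpow_add hx0,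
        Real.rpow_add hx0, Real.rpow_neg_one]
    have hkey : R x = (f' x - l * (f x * x⁻¹)) ^ 2 * x ^ (-2 * l) := by
      simp only [hR, e1, e2]; ring
    rw [hkey]
    exact mul_nonneg (sq_nonneg _) (Real.rpow_nonneg hx0.le _)
  have hRpos : 0 ≤ ∫ x in Ioc (0:ℝ) x₀, R x :=
    setIntegral_nonneg measurableSet_Ioc hRnonneg
  have e_add2 : (∫ x in Ioc (0:ℝ) x₀,
        ((f' x) ^ 2 * x ^ (-2 * l) - (2 * l) • (f x * f' x * x ^ (-2 * l - 1))
          + (l ^ 2) • ((f x) ^ 2 * x ^ (-2 * l - 2))))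
      = (∫ x in Ioc (0:ℝ) x₀,
          ((f' x) ^ 2 * x ^ (-2 * l) - (2 * l) • (f x * f' x * x ^ (-2 * l - 1))))
        + ∫ x in Ioc (0:ℝ) x₀, (l ^ 2) • ((f x) ^ 2 * x ^ (-2 * l - 2)) := by
    exact integral_add (by exact hint1.sub (hint3.smul (2 * l))) (by exact hint2.smul (l ^ 2))
  have e_sub2 : (∫ x in Ioc (0:ℝ) x₀,
        ((f' x) ^ 2 * x ^ (-2 * l) - (2 * l) • (f x * f' x * x ^ (-2 * l - 1))))
      = (∫ x in Ioc (0:ℝ) x₀, (f' x) ^ 2 * x ^ (-2 * l))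
        - ∫ x in Ioc (0:ℝ) x₀, (2 * l) • (f x * f' x * x ^ (-2 * l - 1)) := by
    exact integral_sub hint1 (by exact hint3.smul (2 * l))
  have e_s3 : (∫ x in Ioc (0:ℝ) x₀, (2 * l) • (f x * f' x * x ^ (-2 * l - 1)))
      = (2 * l) • ∫ x in Ioc (0:ℝ) x₀, f x * f' x * x ^ (-2 * l - 1) := by
    exact integral_smul (2 * l) _
  have e_s4 : (∫ x in Ioc (0:ℝ) x₀, (l ^ 2) • ((f x) ^ 2 * x ^ (-2 * l - 2)))
      = (l ^ 2) • ∫ x in Ioc (0:ℝ) x₀, (f x) ^ 2 * x ^ (-2 * l - 2) := by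
    exact integral_smul (l ^ 2) _
  have hRval : (∫ x in Ioc (0:ℝ) x₀, R x)
      = (∫ x in Ioc (0:ℝ) x₀, (f' x) ^ 2 * x ^ (-2 * l))
        - 2 * l * (∫ x in Ioc (0:ℝ) x₀, f x * f' x * x ^ (-2 * l - 1))
        + l ^ 2 * ∫ x in Ioc (0:ℝ) x₀, B x := by
    have hcong2 : (∫ x in Ioc (0:ℝ) x₀, R x) = ∫ x in Ioc (0:ℝ) x₀,
        ((f' x) ^ 2 * x ^ (-2 * l) - (2 * l) • (f x * f' x * x ^ (-2 * l - 1))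
          + (l ^ 2) • ((f x) ^ 2 * x ^ (-2 * l - 2))) := by
      congr 1
    rw [hcong2, e_add2, e_sub2, e_s3, e_s4]
    simp only [smul_eq_mul, hB]
  have hBpos : 0 ≤ ∫ x in Ioc (0:ℝ) x₀, B x :=
    setIntegral_nonneg measurableSet_Ioc (fun x hx =>
      mul_nonneg (sq_nonneg _) (Real.rpow_nonneg hx.1.le _))
  rw [hRval] at hRpos
  rw [hA3] at part1
  have := mul_nonneg hl.le hBpos
  show _ ≥ l ^ 2 * ∫ x in Ioc (0:ℝ) x₀, B x
  nlinarith
end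

section
/- (One-dimensional model of Theorem 2, unique continuation for an ODE system.) Let u, h : [r₀, ∞) → ℝ be C² functions satisfying a second-order linear system u'' = a(r) u' + b(r) u + c(r) h + d(r) h' , h' = e(r) u, with all coefficient functions a, b, c, d, e uniformly bounded. If |u(r)| + |u'(r)| + |h(r)| decays faster than e^{-λ r} for every λ > 0, then u ≡ 0 and h ≡ 0 on [r₀+1, ∞). -/
open Set Filter Real Asymptotics

open Topology

set_option maxHeartbeats 1000000

/-- One-dimensional model of Theorem 2 (unique continuation for an ODE system):
if `u'' = a u' + b u + c h + d h'` and `h' = e u` with bounded coefficients, and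
`|u| + |u'| + |h|` decays faster than every exponential, then `u ≡ 0` and `h ≡ 0`
on `[r₀ + 1, ∞)`. -/
theorem stmt17 (r₀ : ℝ) (u h a b c d e : ℝ → ℝ)
    (hu : ContDiffOn ℝ 2 u (Ici r₀)) (hh : ContDiffOn ℝ 2 h (Ici r₀))
    (hbdd : ∃ M : ℝ, ∀ r ∈ Ici r₀, |a r| ≤ M ∧ |b r| ≤ M ∧ |c r| ≤ M ∧ |d r| ≤ M ∧ |e r| ≤ M)
    (hODEu : ∀ r ∈ Ici r₀, deriv (deriv u) r =
        a r * deriv u r + b r * u r + c r * h r + d r * deriv h r)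
    (hODEh : ∀ r ∈ Ici r₀, deriv h r = e r * u r)
    (hdecay : ∀ l : ℝ, 0 < l →
      (fun r => |u r| + |deriv u r| + |h r|) =O[atTop] fun r => exp (-l * r)) :
    ∀ r ∈ Ici (r₀ + 1), u r = 0 ∧ h r = 0 := by
  obtain ⟨M, hM⟩ := hbdd
  have hM0 : 0 ≤ M := le_trans (abs_nonneg _) (hM r₀ self_mem_Ici).1
  set C : ℝ := 10 * (M + 1) ^ 2 with hC
  have hC0 : 0 ≤ C := by positivity
  set g : ℝ → ℝ := fun r => u r ^ 2 + deriv u r ^ 2 + h r ^ 2 with hg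
  set F : ℝ → ℝ := fun r => exp (C * r) * g r with hF
  -- smoothness on the open set Ioi r₀
  have huO : ContDiffOn ℝ 2 u (Ioi r₀) := hu.mono Ioi_subset_Ici_self
  have hhO : ContDiffOn ℝ 2 h (Ioi r₀) := hh.mono Ioi_subset_Ici_self
  have hduO : ContDiffOn ℝ 1 (deriv u) (Ioi r₀) :=
    huO.deriv_of_isOpen isOpen_Ioi (by norm_num)
  -- derivative facts at points of Ioi r₀
  have hderiv : ∀ r ∈ Ioi r₀, HasDerivAt F
      (exp (C * r) * (C * g r +
        (2 * u r * deriv u r + 2 * deriv u r * deriv (deriv u) r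
          + 2 * h r * deriv h r))) r := by
    intro r hr
    have hu1 : HasDerivAt u (deriv u r) r :=
      ((huO.differentiableOn (by norm_num)).differentiableAt
        (isOpen_Ioi.mem_nhds hr)).hasDerivAt
    have hu2 : HasDerivAt (deriv u) (deriv (deriv u) r) r :=
      ((hduO.differentiableOn (by norm_num)).differentiableAt
        (isOpen_Ioi.mem_nhds hr)).hasDerivAt
    have hh1 : HasDerivAt h (deriv h r) r :=
      ((hhO.differentiableOn (by norm_num)).differentiableAt
        (isOpen_Ioi.mem_nhds hr)).hasDerivAt
    have hg1 : HasDerivAt g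
        (2 * u r * deriv u r + 2 * deriv u r * deriv (deriv u) r
          + 2 * h r * deriv h r) r := by
      have := ((hu1.pow 2).add (hu2.pow 2)).add (hh1.pow 2)
      refine this.congr_deriv ?_
      ring
    have hexp : HasDerivAt (fun x => exp (C * x)) (exp (C * r) * C) r := by
      have := ((hasDerivAt_id r).const_mul C).exp
      simpa using this
    have := hexp.mul hg1
    refine this.congr_deriv ?_
    ring
  -- nonnegativity of the derivative of F on Ioi r₀
  have hF'nonneg : ∀ r ∈ Ioi r₀, 0 ≤ deriv F r := by
    intro r hr
    rw [(hderiv r hr).deriv]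
    have hrI : r ∈ Ici r₀ := mem_Ici.mpr (le_of_lt hr)
    obtain ⟨hA, hB, hCc, hD, hE⟩ := hM r hrI
    have hu'' := hODEu r hrI
    have hh' := hODEh r hrI
    have hKbd : |d r * e r| ≤ M ^ 2 := by
      rw [abs_mul]
      calc |d r| * |e r| ≤ M * M := mul_le_mul hD hE (abs_nonneg _) hM0
        _ = M ^ 2 := (sq M).symm
    rw [abs_le] at hA hB hCc hE hKbd
    apply mul_nonneg (exp_pos _).le
    rw [hu'', hh']
    simp only [hg, hC]
    set U := u r with hU; set V := deriv u r with hV; set H := h r with hH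
    clear_value U V H
    have e1 : 0 ≤ (M + a r) * V ^ 2 := mul_nonneg (by linarith [hA.1]) (sq_nonneg V)
    have e2 : 0 ≤ (M + b r) * (U + V) ^ 2 := mul_nonneg (by linarith [hB.1]) (sq_nonneg _)
    have e3 : 0 ≤ (M - b r) * (U - V) ^ 2 := mul_nonneg (by linarith [hB.2]) (sq_nonneg _)
    have e4 : 0 ≤ (M + c r) * (V + H) ^ 2 := mul_nonneg (by linarith [hCc.1]) (sq_nonneg _)
    have e5 : 0 ≤ (M - c r) * (V - H) ^ 2 := mul_nonneg (by linarith [hCc.2]) (sq_nonneg _)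
    have e6 : 0 ≤ (M ^ 2 + d r * e r) * (U + V) ^ 2 :=
      mul_nonneg (by linarith [hKbd.1]) (sq_nonneg _)
    have e7 : 0 ≤ (M ^ 2 - d r * e r) * (U - V) ^ 2 :=
      mul_nonneg (by linarith [hKbd.2]) (sq_nonneg _)
    have e8 : 0 ≤ (M + e r) * (U + H) ^ 2 := mul_nonneg (by linarith [hE.1]) (sq_nonneg _)
    have e9 : 0 ≤ (M - e r) * (U - H) ^ 2 := mul_nonneg (by linarith [hE.2]) (sq_nonneg _)
    have f1 : -(M * V ^ 2) ≤ a r * V ^ 2 := by linarith [e1]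
    have f2 : -(M * (U ^ 2 + V ^ 2)) ≤ 2 * (b r * (U * V)) := by linarith [e2, e3]
    have f3 : -(M * (V ^ 2 + H ^ 2)) ≤ 2 * (c r * (V * H)) := by linarith [e4, e5]
    have f4 : -(M ^ 2 * (U ^ 2 + V ^ 2)) ≤ 2 * (d r * e r * (U * V)) := by
      linarith [e6, e7]
    have f5 : -(M * (U ^ 2 + H ^ 2)) ≤ 2 * (e r * (U * H)) := by linarith [e8, e9]
    have f6 : -(U ^ 2 + V ^ 2) ≤ 2 * (U * V) := by linarith [sq_nonneg (U + V)]
    have m1 : 0 ≤ M * U ^ 2 := mul_nonneg hM0 (sq_nonneg U)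
    have m2 : 0 ≤ M * V ^ 2 := mul_nonneg hM0 (sq_nonneg V)
    have m3 : 0 ≤ M * H ^ 2 := mul_nonneg hM0 (sq_nonneg H)
    have m4 : 0 ≤ M ^ 2 * U ^ 2 := mul_nonneg (sq_nonneg M) (sq_nonneg U)
    have m5 : 0 ≤ M ^ 2 * V ^ 2 := mul_nonneg (sq_nonneg M) (sq_nonneg V)
    have m6 : 0 ≤ M ^ 2 * H ^ 2 := mul_nonneg (sq_nonneg M) (sq_nonneg H)
    linarith [f1, f2, f3, f4, f5, f6, m1, m2, m3, m4, m5, m6,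
      sq_nonneg U, sq_nonneg V, sq_nonneg H]
  -- F is monotone on Ioi r₀
  have hFd : DifferentiableOn ℝ F (Ioi r₀) := fun r hr =>
    ((hderiv r hr).differentiableAt).differentiableWithinAt
  have hmono : MonotoneOn F (Ioi r₀) := by
    apply monotoneOn_of_deriv_nonneg (convex_Ioi r₀) hFd.continuousOn
    · rw [interior_Ioi]; exact hFd
    · rw [interior_Ioi]; exact hF'nonneg
  -- decay bound
  intro r hr
  have hrO : r ∈ Ioi r₀ := lt_of_lt_of_le (by linarith : r₀ < r₀ + 1) hr
  set l : ℝ := C + 1 with hl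
  have hl0 : (0:ℝ) < l := by positivity
  obtain ⟨K, hK⟩ := (hdecay l hl0).bound
  have hFr0 : F r ≤ 0 := by
    have htend : Tendsto (fun R => K ^ 2 * exp ((C - 2 * l) * R)) atTop (𝓝 0) := by
      have h1 : Tendsto (fun R : ℝ => (2 * l - C) * R) atTop atTop :=
        Tendsto.const_mul_atTop (by linarith) tendsto_id
      have h2 : Tendsto (fun R => exp (-((2 * l - C) * R))) atTop (𝓝 0) :=
        tendsto_exp_neg_atTop_nhds_zero.comp h1
      have h3 : (fun R => K ^ 2 * exp ((C - 2 * l) * R)) =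
          fun R => K ^ 2 * exp (-((2 * l - C) * R)) := by
        funext R; ring_nf
      rw [h3]
      simpa using h2.const_mul (K ^ 2)
    apply ge_of_tendsto htend
    filter_upwards [hK, eventually_ge_atTop r] with R hR1 hR2
    have hRO : R ∈ Ioi r₀ := lt_of_lt_of_le hrO hR2
    have hstep : F r ≤ F R := hmono hrO hRO hR2
    have habs : |u R| + |deriv u R| + |h R| ≤ K * exp (-l * R) := by
      have := hR1
      rw [norm_eq_abs, norm_eq_abs, abs_exp] at this
      exact le_trans (le_abs_self _) this
    have hsum0 : 0 ≤ |u R| + |deriv u R| + |h R| := by positivity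
    have hgR : g R ≤ (K * exp (-l * R)) ^ 2 := by
      have h1 : g R ≤ (|u R| + |deriv u R| + |h R|) ^ 2 := by
        simp only [hg]
        have s1 := sq_abs (u R); have s2 := sq_abs (deriv u R); have s3 := sq_abs (h R)
        have p1 := mul_nonneg (abs_nonneg (u R)) (abs_nonneg (deriv u R))
        have p2 := mul_nonneg (abs_nonneg (u R)) (abs_nonneg (h R))
        have p3 := mul_nonneg (abs_nonneg (deriv u R)) (abs_nonneg (h R))
        nlinarith [s1, s2, s3, p1, p2, p3]
      calc g R ≤ (|u R| + |deriv u R| + |h R|) ^ 2 := h1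
        _ ≤ (K * exp (-l * R)) ^ 2 := by
            apply pow_le_pow_left₀ hsum0 habs
    have hFR : F R ≤ K ^ 2 * exp ((C - 2 * l) * R) := by
      have : exp (C * R) * g R ≤ exp (C * R) * (K * exp (-l * R)) ^ 2 :=
        mul_le_mul_of_nonneg_left hgR (exp_pos _).le
      calc F R = exp (C * R) * g R := rfl
        _ ≤ exp (C * R) * (K * exp (-l * R)) ^ 2 := this
        _ = K ^ 2 * (exp (C * R) * (exp (-l * R) * exp (-l * R))) := by ring
        _ = K ^ 2 * exp ((C - 2 * l) * R) := by
            rw [← exp_add, ← exp_add]; ring_nf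
    linarith
  have hgr0 : g r = 0 := by
    have hF0 : 0 ≤ F r := mul_nonneg (exp_pos _).le (by positivity)
    have : F r = 0 := le_antisymm hFr0 hF0
    have hE := exp_pos (C * r)
    have : exp (C * r) * g r = 0 := this
    exact (mul_eq_zero.mp this).resolve_left (ne_of_gt hE)
  have hgr0' : u r ^ 2 + deriv u r ^ 2 + h r ^ 2 = 0 := by
    have := hgr0; simp only [hg] at this; exact this
  have hu0 : u r ^ 2 = 0 := le_antisymm
    (by linarith [sq_nonneg (deriv u r), sq_nonneg (h r)]) (sq_nonneg _)
  have hh0 : h r ^ 2 = 0 := le_antisymm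
    (by linarith [sq_nonneg (deriv u r), sq_nonneg (u r)]) (sq_nonneg _)
  exact ⟨sq_eq_zero_iff.mp hu0, sq_eq_zero_iff.mp hh0⟩
end

section
/- Let λ ≥ 1 and u ∈ C_c^∞((r₀, ∞)) (smooth compactly supported). Then ∫ |u''(r)|² e^{2λ r} dr ≥ (1/C) (λ^{-1} ∫ |u''|² e^{2λr} dr + λ ∫ |u'|² e^{2λr} dr + λ³ ∫ |u|² e^{2λr} dr) for a universal constant C. In particular ∫ |u''|² e^{2λr} dr ≥ C^{-1} λ³ ∫ |u|² e^{2λr} dr. -/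
open MeasureTheory Set Filter Real
open scoped ContDiff

lemma carleman_aux_integrable {f g : ℝ → ℝ} (hf : Continuous f) (hg : Continuous g)
    (hc : HasCompactSupport f) : Integrable (fun r => f r * g r) :=
  (hf.mul hg).integrable_of_hasCompactSupport hc.mul_right

lemma carleman_aux_ibp {f g f' g' : ℝ → ℝ}
    (hdf : ∀ x, HasDerivAt f (f' x) x) (hdg : ∀ x, HasDerivAt g (g' x) x)
    (hf : Continuous f) (hg : Continuous g) (hf' : Continuous f') (hg' : Continuous g')
    (hcf : HasCompactSupport f) (hcg : HasCompactSupport g) :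
    ∫ x, f x * g' x = - ∫ x, f' x * g x :=
  integral_mul_deriv_eq_deriv_mul_of_integrable (fun x _ => hdf x) (fun x _ => hdg x)
    (carleman_aux_integrable hf hg' hcf)
    ((carleman_aux_integrable hg hf' hcg).congr (by
      filter_upwards with x using by simp [Pi.mul_apply, mul_comm]))
    (carleman_aux_integrable hf hg hcf)

lemma carleman_arith {l A B D I1 t : ℝ} (hl : 1 ≤ l) (hA : 0 ≤ A) (hB : 0 ≤ B) (hD : 0 ≤ D)
    (hI1 : I1 ≤ 2*B + 2*l^2*D) (ht : t ≤ A + 2*l^2*B + l^4*D) :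
    (5:ℝ)⁻¹ * (t + l * I1 + l^3 * D) ≤ A + 2*l^2*B + l^4*D := by
  have hl0 : (0:ℝ) < l := lt_of_lt_of_le one_pos hl
  have h1 : l * I1 ≤ 2*l*B + 2*l^3*D := by
    nlinarith [mul_le_mul_of_nonneg_left hI1 hl0.le]
  have h2 : 2*l*B ≤ 2*l^2*B := by
    nlinarith [mul_nonneg (mul_nonneg hl0.le (sub_nonneg.2 hl)) hB]
  have h3 : 2*l^3*D ≤ 2*l^4*D := by
    nlinarith [mul_nonneg (mul_nonneg (pow_pos hl0 3).le (sub_nonneg.2 hl)) hD]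
  have h4 : l^3*D ≤ l^4*D := by
    nlinarith [mul_nonneg (mul_nonneg (pow_pos hl0 3).le (sub_nonneg.2 hl)) hD]
  have h5 : 0 ≤ 2*l^2*B := by positivity
  have h6 : 0 ≤ l^4*D := by positivity
  have h7 : 0 ≤ l^2*B := by positivity
  have h8 : 0 ≤ A + 2*l^2*B + l^4*D := by positivity
  linarith

lemma carleman_arith2 {l A B D : ℝ} (hl : 1 ≤ l) (hA : 0 ≤ A) (hB : 0 ≤ B) (hD : 0 ≤ D) :
    (5:ℝ)⁻¹ * l^3 * D ≤ A + 2*l^2*B + l^4*D := by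
  have hl0 : (0:ℝ) < l := lt_of_lt_of_le one_pos hl
  have h4 : l^3*D ≤ l^4*D := by
    nlinarith [mul_nonneg (mul_nonneg (pow_pos hl0 3).le (sub_nonneg.2 hl)) hD]
  have h5 : 0 ≤ l^3*D := by positivity
  have h7 : 0 ≤ l^2*B := by positivity
  nlinarith

/-- One-dimensional Carleman estimate with exponential weight `e^{2λr}` (scalar model of
Mazzeo's estimate (12)): there is a universal constant `C > 0` such that for all `λ ≥ 1`
and all smooth compactly supported `u` on `(r₀, ∞)`,
`∫ |u''|² e^{2λr} ≥ C⁻¹ (λ⁻¹ ∫ |u''|² e^{2λr} + λ ∫ |u'|² e^{2λr} + λ³ ∫ |u|² e^{2λr})`,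
and in particular `∫ |u''|² e^{2λr} ≥ C⁻¹ λ³ ∫ |u|² e^{2λr}`. -/
theorem stmt18 :
    ∃ C : ℝ, 0 < C ∧ ∀ (r₀ l : ℝ), 1 ≤ l → ∀ u : ℝ → ℝ,
      ContDiff ℝ (⊤ : ℕ∞) u → HasCompactSupport u → tsupport u ⊆ Ioi r₀ →
      ((∫ r, (deriv (deriv u) r) ^ 2 * exp (2 * l * r)) ≥
        C⁻¹ * (l⁻¹ * (∫ r, (deriv (deriv u) r) ^ 2 * exp (2 * l * r)) +
          l * (∫ r, (deriv u r) ^ 2 * exp (2 * l * r)) +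
          l ^ 3 * ∫ r, (u r) ^ 2 * exp (2 * l * r)) ∧
      (∫ r, (deriv (deriv u) r) ^ 2 * exp (2 * l * r)) ≥
        C⁻¹ * l ^ 3 * ∫ r, (u r) ^ 2 * exp (2 * l * r)) := by
  refine ⟨5, by norm_num, fun r₀ l hl u hu hcs _ => ?_⟩
  have hl0 : (0:ℝ) < l := lt_of_lt_of_le one_pos hl
  -- smoothness of derivatives
  have hu' : ContDiff ℝ ∞ u := hu.of_le (by simp)
  have hu1 : ContDiff ℝ ∞ (deriv u) := (contDiff_infty_iff_deriv.mp hu').2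
  have hu2 : ContDiff ℝ ∞ (deriv (deriv u)) := (contDiff_infty_iff_deriv.mp hu1).2
  have hucont : Continuous u := hu.continuous
  have hu1cont : Continuous (deriv u) := hu1.continuous
  have hu2cont : Continuous (deriv (deriv u)) := hu2.continuous
  have hcs1 : HasCompactSupport (deriv u) := hcs.deriv
  -- the conjugated function v = e^{lr} u and its derivatives
  set e : ℝ → ℝ := fun r => exp (l * r) with he_def
  have he_cont : Continuous e := Real.continuous_exp.comp (continuous_const.mul continuous_id)
  set v : ℝ → ℝ := fun r => e r * u r with hv_def
  set v₁ : ℝ → ℝ := fun r => e r * (l * u r + deriv u r) with hv1_def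
  set v₂ : ℝ → ℝ := fun r => e r * (l ^ 2 * u r + 2 * l * deriv u r + deriv (deriv u) r)
    with hv2_def
  have hde : ∀ r, HasDerivAt e (e r * l) r := by
    intro r
    have h := ((hasDerivAt_id r).const_mul l).exp
    simp only [id_eq, mul_one] at h
    exact h
  have hdu : ∀ r, HasDerivAt u (deriv u r) r :=
    fun r => (hu'.differentiable (by norm_num) r).hasDerivAt
  have hdu1 : ∀ r, HasDerivAt (deriv u) (deriv (deriv u) r) r :=
    fun r => (hu1.differentiable (by norm_num) r).hasDerivAt
  have hdv : ∀ r, HasDerivAt v (v₁ r) r := by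
    intro r
    have := (hde r).mul (hdu r)
    convert this using 1
    case e'_9 => simp only [hv1_def]; ring
    all_goals rfl
  have hdv1 : ∀ r, HasDerivAt v₁ (v₂ r) r := by
    intro r
    have := (hde r).mul (((hdu r).const_mul l).add (hdu1 r))
    convert this using 1
    case e'_9 => simp only [hv2_def, Pi.add_apply]; ring
    all_goals rfl
  -- continuity and compact support of v, v₁, v₂
  have hvc : Continuous v := he_cont.mul hucont
  have hv1c : Continuous v₁ := he_cont.mul ((continuous_const.mul hucont).add hu1cont)
  have hv2c : Continuous v₂ := he_cont.mul
    (((continuous_const.mul hucont).add (continuous_const.mul hu1cont)).add hu2cont)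
  have hvs : HasCompactSupport v := hcs.mul_left
  have hv1s : HasCompactSupport v₁ := HasCompactSupport.mul_left
    (((hcs.mul_left : HasCompactSupport (fun r => l * u r)).add hcs1))
  have hv2s : HasCompactSupport v₂ := HasCompactSupport.mul_left
    ((((hcs.mul_left : HasCompactSupport (fun r => l^2 * u r)).add
      (hcs1.mul_left : HasCompactSupport (fun r => 2*l * deriv u r))).add hcs.deriv.deriv)
      : HasCompactSupport (fun r => l^2 * u r + 2*l*deriv u r + deriv (deriv u) r))
  -- exp(2lr) = e r * e r
  have hee : ∀ r, exp (2 * l * r) = e r * e r := by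
    intro r; rw [he_def, ← Real.exp_add]; ring_nf
  -- the three basic integrals
  set A := ∫ r, v₂ r * v₂ r with hA_def
  set B := ∫ r, v₁ r * v₁ r with hB_def
  set D := ∫ r, v r * v r with hD_def
  have hA0 : 0 ≤ A := integral_nonneg fun r => mul_self_nonneg _
  have hB0 : 0 ≤ B := integral_nonneg fun r => mul_self_nonneg _
  have hD0 : 0 ≤ D := integral_nonneg fun r => mul_self_nonneg _
  -- integration-by-parts facts
  have h11 : (∫ r, v₁ r * v₂ r) = 0 := by
    have h := carleman_aux_ibp hdv1 hdv1 hv1c hv1c hv2c hv2c hv1s hv1s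
    have h2 : (∫ r, v₂ r * v₁ r) = ∫ r, v₁ r * v₂ r := by
      congr 1; funext r; ring
    linarith [h, h2.symm ▸ h]
  have h00 : (∫ r, v r * v₁ r) = 0 := by
    have h := carleman_aux_ibp hdv hdv hvc hvc hv1c hv1c hvs hvs
    have h2 : (∫ r, v₁ r * v r) = ∫ r, v r * v₁ r := by
      congr 1; funext r; ring
    linarith [h, h2.symm ▸ h]
  have h02 : (∫ r, v r * v₂ r) = - B := by
    have h := carleman_aux_ibp hdv hdv1 hvc hv1c hv1c hv2c hvs hv1s
    rw [h, hB_def]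
  -- integrability of all pieces
  have iA : Integrable (fun r => v₂ r * v₂ r) := carleman_aux_integrable hv2c hv2c hv2s
  have iB : Integrable (fun r => v₁ r * v₁ r) := carleman_aux_integrable hv1c hv1c hv1s
  have iD : Integrable (fun r => v r * v r) := carleman_aux_integrable hvc hvc hvs
  have i21 : Integrable (fun r => v₂ r * v₁ r) := carleman_aux_integrable hv2c hv1c hv2s
  have i20 : Integrable (fun r => v₂ r * v r) := carleman_aux_integrable hv2c hvc hv2s
  have i10 : Integrable (fun r => v₁ r * v r) := carleman_aux_integrable hv1c hvc hv1s
  -- the key identity : ∫ u''² e^{2lr} = A + 2l²B + l⁴D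
  have key : (∫ r, (deriv (deriv u) r) ^ 2 * exp (2 * l * r))
      = A + 2 * l ^ 2 * B + l ^ 4 * D := by
    have expand : (fun r => (deriv (deriv u) r) ^ 2 * exp (2 * l * r))
        = fun r => v₂ r * v₂ r + ((4 * l ^ 2) * (v₁ r * v₁ r) + ((l ^ 4) * (v r * v r) +
          ((-4 * l) * (v₂ r * v₁ r) + ((2 * l ^ 2) * (v₂ r * v r) +
          (-4 * l ^ 3) * (v₁ r * v r))))) := by
      funext r
      have h1 : e r * deriv (deriv u) r = v₂ r - 2 * l * v₁ r + l ^ 2 * v r := by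
        simp only [hv_def, hv1_def, hv2_def]; ring
      have h0 : (0:ℝ) < e r := Real.exp_pos _
      rw [hee r]
      have h2 : deriv (deriv u) r ^ 2 * (e r * e r)
          = (e r * deriv (deriv u) r) * (e r * deriv (deriv u) r) := by ring
      rw [h2, h1]; ring
    rw [expand]
    have k2 : Integrable (fun r => (4*l^2) * (v₁ r * v₁ r)) := iB.const_mul _
    have k3 : Integrable (fun r => (l^4) * (v r * v r)) := iD.const_mul _
    have k4 : Integrable (fun r => (-4*l) * (v₂ r * v₁ r)) := i21.const_mul _
    have k5 : Integrable (fun r => (2*l^2) * (v₂ r * v r)) := i20.const_mul _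
    have k6 : Integrable (fun r => (-4*l^3) * (v₁ r * v r)) := i10.const_mul _
    have j5 : Integrable (fun r => (2*l^2) * (v₂ r * v r) + (-4*l^3) * (v₁ r * v r)) :=
      k5.add k6
    have j4 : Integrable (fun r => (-4*l) * (v₂ r * v₁ r) +
        ((2*l^2) * (v₂ r * v r) + (-4*l^3) * (v₁ r * v r))) := k4.add j5
    have j3 : Integrable (fun r => (l^4) * (v r * v r) + ((-4*l) * (v₂ r * v₁ r) +
        ((2*l^2) * (v₂ r * v r) + (-4*l^3) * (v₁ r * v r)))) := k3.add j4
    have j2 : Integrable (fun r => (4*l^2) * (v₁ r * v₁ r) + ((l^4) * (v r * v r) +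
        ((-4*l) * (v₂ r * v₁ r) + ((2*l^2) * (v₂ r * v r) + (-4*l^3) * (v₁ r * v r))))) :=
      k2.add j3
    rw [integral_add iA j2, integral_add k2 j3, integral_add k3 j4, integral_add k4 j5,
      integral_add k5 k6, integral_const_mul, integral_const_mul, integral_const_mul,
      integral_const_mul, integral_const_mul]
    have h21 : (∫ r, v₂ r * v₁ r) = 0 := by
      rw [show (fun r => v₂ r * v₁ r) = fun r => v₁ r * v₂ r from funext fun r => mul_comm _ _]
      exact h11
    have h20 : (∫ r, v₂ r * v r) = -B := by
      rw [show (fun r => v₂ r * v r) = fun r => v r * v₂ r from funext fun r => mul_comm _ _]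
      exact h02
    have h10 : (∫ r, v₁ r * v r) = 0 := by
      rw [show (fun r => v₁ r * v r) = fun r => v r * v₁ r from funext fun r => mul_comm _ _]
      exact h00
    rw [h21, h20, h10, ← hA_def]
    ring
  -- I0 = D
  have hI0 : (∫ r, (u r) ^ 2 * exp (2 * l * r)) = D := by
    rw [hD_def]
    congr 1; funext r
    rw [hee r]; simp only [hv_def]; ring
  -- I1 ≤ 2B + 2l²D
  have hI1 : (∫ r, (deriv u r) ^ 2 * exp (2 * l * r)) ≤ 2 * B + 2 * l ^ 2 * D := by
    have hint1 : Integrable (fun r => (deriv u r) ^ 2 * exp (2 * l * r)) := by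
      have : (fun r => (deriv u r) ^ 2 * exp (2 * l * r))
          = fun r => deriv u r * (deriv u r * exp (2 * l * r)) := by funext r; ring
      rw [this]
      exact carleman_aux_integrable hu1cont (hu1cont.mul (by continuity)) hcs1
    have hint2 : Integrable (fun r => 2 * (v₁ r * v₁ r) + 2 * l ^ 2 * (v r * v r)) :=
      (iB.const_mul _).add (iD.const_mul _)
    have hmono := integral_mono hint1 hint2 (fun r => by
      have h1 : e r * deriv u r = v₁ r - l * v r := by
        simp only [hv_def, hv1_def]; ring
      have h2 : deriv u r ^ 2 * (e r * e r)
          = (v₁ r - l * v r) * (v₁ r - l * v r) := by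
        have h3 : deriv u r ^ 2 * (e r * e r)
            = (e r * deriv u r) * (e r * deriv u r) := by ring
        rw [h3, h1]
      rw [hee r, h2]
      nlinarith [sq_nonneg (v₁ r + l * v r)])
    rw [integral_add (iB.const_mul _) (iD.const_mul _), integral_const_mul,
      integral_const_mul] at hmono
    linarith [hmono]
  set I2 := ∫ r, (deriv (deriv u) r) ^ 2 * exp (2 * l * r) with hI2_def
  set I1 := ∫ r, (deriv u r) ^ 2 * exp (2 * l * r) with hI1_def
  have hI2nn : 0 ≤ I2 := by
    rw [key]; positivity
  have hinv : l⁻¹ * I2 ≤ I2 :=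
    mul_le_of_le_one_left hI2nn (inv_le_one_of_one_le₀ hl)
  rw [key] at hinv
  constructor
  · rw [ge_iff_le, hI0, key]
    exact carleman_arith hl hA0 hB0 hD0 hI1 hinv
  · rw [ge_iff_le, hI0, key]
    exact carleman_arith2 hl hA0 hB0 hD0
end
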